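/- If P is a positive program, Q an arbitrary program, and the total A-SE-models of P and Q coincide, then every A-SE-model of P is an A-SE-model of Q. Consequently, for positive programs P and Q, relative strong equivalence P ≡ˢ_A Q, relative uniform equivalence P ≡ᵘ_A Q, and coincidence of total A-SE-models are all equivalent. -/

import Mathlib

structure Rule where
  head : Finset ℕ
  pos : Finset ℕ
  neg : Finset ℕ

abbrev Interp := Set ℕ
abbrev Program := Set Rule

/-- Classical satisfaction of a rule by an interpretation. -/
def Rule.satisfied (I : Interp) (r : Rule) : Prop :=
  ((↑r.pos ⊆ I) ∧ ∀ a ∈ r.neg, a ∉ I) → ∃ a ∈ r.head, a ∈ I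

/-- `I` is a classical model of the program `P`. -/
def Models (I : Interp) (P : Program) : Prop := ∀ r ∈ P, Rule.satisfied I r

/-- `X` models the Gelfond-Lifschitz reduct `P^Y`. -/
def ModelsReduct (X : Interp) (P : Program) (Y : Interp) : Prop :=
  ∀ r ∈ P, (∀ a ∈ r.neg, a ∉ Y) → (↑r.pos ⊆ X) → ∃ a ∈ r.head, a ∈ X

/-- `Y` is an answer set of `P`: a minimal model of the reduct `P^Y`. -/
def AnswerSet (P : Program) (Y : Interp) : Prop :=
  ModelsReduct Y P Y ∧ ∀ Z : Interp, Z ⊂ Y → ¬ ModelsReduct Z P Y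

/-- `(X,Y)` is an SE-model of `P`. -/
def SEModel (P : Program) (X Y : Interp) : Prop :=
  X ⊆ Y ∧ Models Y P ∧ ModelsReduct X P Y

/-- `(X,Y)` is a UE-model of `P`. -/
def UEModel (P : Program) (X Y : Interp) : Prop :=
  SEModel P X Y ∧ ∀ X', SEModel P X' Y → X ⊂ X' → X' = Y

/-- The program consisting of the atoms in `F` as facts. -/
def Facts (F : Set ℕ) : Program := { r | ∃ a ∈ F, r = ⟨{a}, ∅, ∅⟩ }

/-- Uniform equivalence of programs. -/
def UnifEquiv (P Q : Program) : Prop :=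
  ∀ F : Set ℕ, ∀ Y : Interp, AnswerSet (P ∪ Facts F) Y ↔ AnswerSet (Q ∪ Facts F) Y

/-- Strong equivalence of programs. -/
def StrongEquiv (P Q : Program) : Prop :=
  ∀ R : Program, ∀ Y : Interp, AnswerSet (P ∪ R) Y ↔ AnswerSet (Q ∪ R) Y

def Rule.atoms (r : Rule) : Finset ℕ := r.head ∪ r.pos ∪ r.neg

/-- All atoms occurring in `R` belong to `A`. -/
def ProgramOver (A : Set ℕ) (R : Program) : Prop := ∀ r ∈ R, ↑r.atoms ⊆ A

/-- Strong equivalence relative to a set of atoms `A`. -/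
def RelStrongEquiv (A : Set ℕ) (P Q : Program) : Prop :=
  ∀ R : Program, ProgramOver A R →
    ∀ Y : Interp, AnswerSet (P ∪ R) Y ↔ AnswerSet (Q ∪ R) Y

/-- Uniform equivalence relative to a set of atoms `A`. -/
def RelUnifEquiv (A : Set ℕ) (P Q : Program) : Prop :=
  ∀ F : Set ℕ, F ⊆ A →
    ∀ Y : Interp, AnswerSet (P ∪ Facts F) Y ↔ AnswerSet (Q ∪ Facts F) Y

/-- A unary rule: one head atom, no negation, at most one positive body atom. -/
def Unary (r : Rule) : Prop := r.head.card = 1 ∧ r.neg = ∅ ∧ r.pos.card ≤ 1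

/-- `(X,Y)` is a (relativized) `A`-SE-model of `P`. -/
def ASEModel (A : Set ℕ) (P : Program) (X Y : Interp) : Prop :=
  (X = Y ∨ X ⊂ Y ∩ A) ∧ Models Y P ∧
  (∀ Y' : Interp, Y' ⊂ Y → Y' ∩ A = Y ∩ A → ¬ ModelsReduct Y' P Y) ∧
  (X ⊂ Y → ∃ X' : Interp, X' ⊆ Y ∧ X' ∩ A = X ∧ ModelsReduct X' P Y)

/-- `(X,Y)` is a (relativized) `A`-UE-model of `P`. -/
def AUEModel (A : Set ℕ) (P : Program) (X Y : Interp) : Prop :=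
  ASEModel A P X Y ∧ ∀ X', ASEModel A P X' Y → X ⊂ X' → X' = Y

/-- A positive program: all rules have empty negative body. -/
def Positive (P : Program) : Prop := ∀ r ∈ P, r.neg = ∅

/-- Positive dependency: edge from a positive body atom to a head atom. -/
def Dep (P : Program) (a b : ℕ) : Prop := ∃ r ∈ P, a ∈ r.pos ∧ b ∈ r.head

/-- Head-cycle freeness: no directed cycle of the positive dependency graph
through two distinct head atoms of one rule. -/
def HCF (P : Program) : Prop :=
  ∀ r ∈ P, ∀ a ∈ r.head, ∀ b ∈ r.head, a ≠ b →
    ¬ (Relation.ReflTransGen (Dep P) a b ∧ Relation.ReflTransGen (Dep P) b a)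

/-- The shift of a single rule. -/
def Rule.shift (r : Rule) : Program :=
  if r.head = ∅ then {r}
  else { r' | ∃ a ∈ r.head, r' = ⟨{a}, r.pos, r.neg ∪ (r.head.erase a)⟩ }

/-- The shift of a program. -/
def shiftProg (P : Program) : Program := ⋃ r ∈ P, r.shift

/-- The set of SE-models of `P` as a set of pairs. -/
def SEset (P : Program) : Set (Interp × Interp) := { p | SEModel P p.1 p.2 }


/-! For a positive program the reduct `P^Y` is `P` itself. Given an `A`-SE-model `(X, Y)` of `P`
with witness `X₀`, Zorn's lemma yields a model `M ⊆ X₀` of `P` that is minimal among the models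
meeting `A` in `X` (models of a reduct are closed under intersections of chains, since rule heads
are finite). Minimality makes `(M, M)` a total `A`-SE-model of `P`, hence of `Q`, so `M` is a
witness for `(X, Y)` over `Q`.

For the equivalences: `(Y, Y)` is a total `A`-SE-model of `P` exactly when `Y` is an answer set of
`P` extended by the facts `Y ∩ A`, so relative uniform equivalence forces the total models to agree;
conversely, whether `Y` is an answer set of `P ∪ R` for `R` over `A` depends only on the
`A`-SE-models of `P`, whose coincidence follows from that of the total ones by the first part. -/

section Reduct

variable {P R : Program} {A : Set ℕ} {X Y Z : Interp}

lemma models_iff_modelsReduct_self : Models Y P ↔ ModelsReduct Y P Y :=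
  ⟨fun h r hr hneg hpos => h r hr ⟨hpos, hneg⟩, fun h r hr hbody => h r hr hbody.2 hbody.1⟩

lemma Models.modelsReduct (h : Models X P) (hXY : X ⊆ Y) : ModelsReduct X P Y :=
  fun r hr hneg hpos => h r hr ⟨hpos, fun a ha haX => hneg a ha (hXY haX)⟩

lemma Positive.modelsReduct_iff (hP : Positive P) : ModelsReduct X P Y ↔ Models X P :=
  ⟨fun h r hr hbody => h r hr (by simp [hP r hr]) hbody.1,
    fun h r hr _ hpos => h r hr ⟨hpos, by simp [hP r hr]⟩⟩

lemma modelsReduct_union : ModelsReduct Z (P ∪ R) Y ↔ ModelsReduct Z P Y ∧ ModelsReduct Z R Y :=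
  ⟨fun h => ⟨fun r hr => h r (Or.inl hr), fun r hr => h r (Or.inr hr)⟩,
    fun ⟨hP, hR⟩ r hr => hr.elim (hP r) (hR r)⟩

lemma modelsReduct_facts {F : Set ℕ} : ModelsReduct Z (Facts F) Y ↔ F ⊆ Z := by
  constructor
  · intro h a haF
    obtain ⟨b, hb, hbZ⟩ := h ⟨{a}, ∅, ∅⟩ ⟨a, haF, rfl⟩ (by simp) (by simp)
    rwa [Finset.mem_singleton.mp hb] at hbZ
  · rintro h r ⟨a, haF, rfl⟩ - -
    exact ⟨a, Finset.mem_singleton_self a, h haF⟩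

lemma programOver_facts {F : Set ℕ} (hFA : F ⊆ A) : ProgramOver A (Facts F) := by
  rintro r ⟨a, haF, rfl⟩ x hx
  simp only [Rule.atoms, Finset.union_empty, Finset.coe_singleton, Set.mem_singleton_iff] at hx
  exact hx ▸ hFA haF

lemma ProgramOver.modelsReduct_of_inter_eq (hR : ProgramOver A R) (h : ModelsReduct Z R Y)
    (hXZ : X ∩ A = Z ∩ A) : ModelsReduct X R Y := by
  intro r hr hneg hpos
  have hpos_mem : ∀ a ∈ r.pos, a ∈ A := fun a ha => hR r hr (by simp [Rule.atoms, ha])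
  have hhead_mem : ∀ a ∈ r.head, a ∈ A := fun a ha => hR r hr (by simp [Rule.atoms, ha])
  have hposZ : ↑r.pos ⊆ Z := fun a ha => ((Set.ext_iff.mp hXZ a).mp ⟨hpos ha, hpos_mem a ha⟩).1
  obtain ⟨a, hah, haZ⟩ := h r hr hneg hposZ
  exact ⟨a, hah, ((Set.ext_iff.mp hXZ a).mpr ⟨haZ, hhead_mem a hah⟩).1⟩

end Reduct

lemma IsChain.inter_sInter_nonempty {α : Type*} {c : Set (Set α)} (hc : IsChain (· ⊆ ·) c)
    (hne : c.Nonempty) {s : Set α} (hs : s.Finite) (h : ∀ M ∈ c, (s ∩ M).Nonempty) :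
    (s ∩ ⋂₀ c).Nonempty := by
  have himage : ((s ∩ ·) '' c).Finite :=
    hs.finite_subsets.subset (Set.image_subset_iff.mpr fun _ _ => Set.inter_subset_left)
  obtain ⟨M₁, hM₁, hmin⟩ := Set.Finite.exists_minimalFor' (s ∩ ·) c himage hne
  -- `s ∩ M₁` is the least of the traces `s ∩ M`, so it lies inside every member of the chain
  have hle : ∀ M ∈ c, s ∩ M₁ ⊆ M := by
    intro M hM
    rcases eq_or_ne M₁ M with rfl | hne
    · exact Set.inter_subset_right
    rcases hc hM₁ hM hne with hsub | hsub
    · exact Set.inter_subset_right.trans hsub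
    · exact (hmin hM (Set.inter_subset_inter_right s hsub)).trans Set.inter_subset_right
  obtain ⟨a, has, haM₁⟩ := h M₁ hM₁
  exact ⟨a, has, Set.mem_sInter.mpr fun M hM => hle M hM ⟨has, haM₁⟩⟩

lemma ModelsReduct.sInter_of_isChain {P : Program} {Y : Interp} {c : Set Interp}
    (hc : IsChain (· ⊆ ·) c) (hne : c.Nonempty) (h : ∀ M ∈ c, ModelsReduct M P Y) :
    ModelsReduct (⋂₀ c) P Y := by
  intro r hr hneg hpos
  have hmeet : ∀ M ∈ c, ((r.head : Set ℕ) ∩ M).Nonempty := fun M hM =>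
    let ⟨a, hah, haM⟩ := h M hM r hr hneg (hpos.trans (Set.sInter_subset_of_mem hM))
    ⟨a, hah, haM⟩
  obtain ⟨a, hah, ha⟩ := hc.inter_sInter_nonempty hne r.head.finite_toSet hmeet
  exact ⟨a, hah, ha⟩

lemma exists_minimal_modelsReduct_inter_eq {P : Program} {A : Set ℕ} {X Y X₀ : Interp}
    (hX₀A : X₀ ∩ A = X) (hX₀ : ModelsReduct X₀ P Y) :
    ∃ M ⊆ X₀, Minimal (fun N => N ∩ A = X ∧ ModelsReduct N P Y) M := by
  refine zorn_superset_nonempty {N | N ∩ A = X ∧ ModelsReduct N P Y} ?_ X₀ ⟨hX₀A, hX₀⟩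
  intro c hcS hc ⟨M₀, hM₀⟩
  have hXM : ∀ M ∈ c, X ⊆ M := fun M hM => (hcS hM).1 ▸ Set.inter_subset_left
  refine ⟨⋂₀ c, ⟨?_, ModelsReduct.sInter_of_isChain hc ⟨M₀, hM₀⟩ fun M hM => (hcS hM).2⟩,
    fun M hM => Set.sInter_subset_of_mem hM⟩
  apply Set.Subset.antisymm
  · exact (hcS hM₀).1 ▸ Set.inter_subset_inter_left A (Set.sInter_subset_of_mem hM₀)
  · exact Set.subset_inter (Set.subset_sInter hXM) ((hcS hM₀).1 ▸ Set.inter_subset_right)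

section ASEModel

variable {A : Set ℕ} {P Q R : Program} {X Y Z : Interp}

lemma aseModel_self_iff :
    ASEModel A P Y Y ↔
      Models Y P ∧ ∀ Y' : Interp, Y' ⊂ Y → Y' ∩ A = Y ∩ A → ¬ ModelsReduct Y' P Y :=
  ⟨fun h => ⟨h.2.1, h.2.2.1⟩, fun h => ⟨Or.inl rfl, h.1, h.2, fun hY => absurd rfl hY.ne⟩⟩

lemma ASEModel.of_forall_aseModel_self_iff (hP : Positive P)
    (htot : ∀ Y : Interp, ASEModel A P Y Y ↔ ASEModel A Q Y Y) (h : ASEModel A P X Y) :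
    ASEModel A Q X Y := by
  obtain ⟨hXY, hYP, hYmin, hwit⟩ := h
  have hQ : ASEModel A Q Y Y := (htot Y).mp (aseModel_self_iff.mpr ⟨hYP, hYmin⟩)
  refine ⟨hXY, hQ.2.1, hQ.2.2.1, fun hX => ?_⟩
  obtain ⟨X₀, hX₀Y, hX₀A, hX₀⟩ := hwit hX
  obtain ⟨M, hMX₀, ⟨hMA, hM⟩, hMmin⟩ := exists_minimal_modelsReduct_inter_eq hX₀A hX₀
  have hMP : ASEModel A P M M := by
    refine aseModel_self_iff.mpr ⟨hP.modelsReduct_iff.mp hM, fun M' hM' hM'A hM'M => ?_⟩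
    have hM'P : ModelsReduct M' P Y := hP.modelsReduct_iff.mpr (hP.modelsReduct_iff.mp hM'M)
    exact hM'.not_subset (hMmin ⟨hM'A.trans hMA, hM'P⟩ hM'.subset)
  have hMQ : Models M Q := ((htot M).mp hMP).2.1
  exact ⟨M, hMX₀.trans hX₀Y, hMA, hMQ.modelsReduct (hMX₀.trans hX₀Y)⟩

lemma aseModel_self_iff_answerSet_union_facts :
    ASEModel A P Y Y ↔ AnswerSet (P ∪ Facts (Y ∩ A)) Y := by
  simp only [aseModel_self_iff, AnswerSet, modelsReduct_union, modelsReduct_facts,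
    models_iff_modelsReduct_self, Set.inter_subset_left, and_true]
  refine and_congr_right fun _ => forall_congr' fun Z => forall_congr' fun hZ => ?_
  have hZA : Y ∩ A ⊆ Z ↔ Z ∩ A = Y ∩ A :=
    ⟨fun h => (Set.inter_subset_inter_left A hZ.subset).antisymm
        (Set.subset_inter h Set.inter_subset_right),
      fun h => h ▸ Set.inter_subset_left⟩
  rw [hZA]
  tauto

lemma RelUnifEquiv.aseModel_self (hu : RelUnifEquiv A P Q) (h : ASEModel A P Y Y) :
    ASEModel A Q Y Y :=
  aseModel_self_iff_answerSet_union_facts.mpr <|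
    (hu (Y ∩ A) Set.inter_subset_right Y).mp (aseModel_self_iff_answerSet_union_facts.mp h)

lemma RelStrongEquiv.relUnifEquiv (hs : RelStrongEquiv A P Q) : RelUnifEquiv A P Q :=
  fun F hF Y => hs (Facts F) (programOver_facts hF) Y

lemma AnswerSet.aseModel_self_of_union (hR : ProgramOver A R) (h : AnswerSet (P ∪ R) Y) :
    ASEModel A P Y Y := by
  obtain ⟨hY, hmin⟩ := h
  obtain ⟨hYP, hYR⟩ := modelsReduct_union.mp hY
  refine aseModel_self_iff.mpr ⟨models_iff_modelsReduct_self.mpr hYP, fun Y' hY' hY'A hY'P => ?_⟩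
  exact hmin Y' hY' (modelsReduct_union.mpr ⟨hY'P, hR.modelsReduct_of_inter_eq hYR hY'A⟩)

lemma ASEModel.inter_of_modelsReduct (h : ASEModel A P Y Y) (hZY : Z ⊆ Y)
    (hZA : Z ∩ A ≠ Y ∩ A) (hZ : ModelsReduct Z P Y) : ASEModel A P (Z ∩ A) Y :=
  ⟨Or.inr ((Set.inter_subset_inter_left A hZY).ssubset_of_ne hZA), h.2.1, h.2.2.1,
    fun _ => ⟨Z, hZY, rfl, hZ⟩⟩

lemma AnswerSet.union_of_forall_aseModel_iff
    (hase : ∀ X Y : Interp, ASEModel A P X Y ↔ ASEModel A Q X Y) (hR : ProgramOver A R)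
    (h : AnswerSet (P ∪ R) Y) : AnswerSet (Q ∪ R) Y := by
  have hQ : ASEModel A Q Y Y := (hase Y Y).mp (h.aseModel_self_of_union hR)
  obtain ⟨hY, hmin⟩ := h
  have hYR : ModelsReduct Y R Y := (modelsReduct_union.mp hY).2
  refine ⟨modelsReduct_union.mpr ⟨models_iff_modelsReduct_self.mp hQ.2.1, hYR⟩, fun Z hZ hZQR => ?_⟩
  obtain ⟨hZQ, hZR⟩ := modelsReduct_union.mp hZQR
  by_cases hZA : Z ∩ A = Y ∩ A
  · exact hQ.2.2.1 Z hZ hZA hZQ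
  -- a model of `Q ∪ R` below `Y` that differs from `Y` on `A` is traded, through the
  -- `A`-SE-model `(Z ∩ A, Y)` shared by `Q` and `P`, for a model of `P ∪ R` below `Y`
  have hZAY : Z ∩ A ⊂ Y := Set.inter_subset_left.trans_ssubset hZ
  obtain ⟨X', hX'Y, hX'A, hX'P⟩ :=
    ((hase _ Y).mpr (hQ.inter_of_modelsReduct hZ.subset hZA hZQ)).2.2.2 hZAY
  have hX'ne : X' ≠ Y := fun hX' => hZA (by rw [← hX'A, hX'])
  exact hmin X' (hX'Y.ssubset_of_ne hX'ne)
    (modelsReduct_union.mpr ⟨hX'P, hR.modelsReduct_of_inter_eq hZR hX'A⟩)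

lemma relStrongEquiv_of_forall_aseModel_self_iff (hP : Positive P) (hQ : Positive Q)
    (htot : ∀ Y : Interp, ASEModel A P Y Y ↔ ASEModel A Q Y Y) : RelStrongEquiv A P Q := by
  have hase : ∀ X Y : Interp, ASEModel A P X Y ↔ ASEModel A Q X Y := fun _ _ =>
    ⟨.of_forall_aseModel_self_iff hP htot,
      .of_forall_aseModel_self_iff hQ fun Y => (htot Y).symm⟩
  exact fun R hR Y => ⟨AnswerSet.union_of_forall_aseModel_iff hase hR,
    AnswerSet.union_of_forall_aseModel_iff (fun X Y => (hase X Y).symm) hR⟩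

end ASEModel

theorem stmt15 (A : Set ℕ) :
    (∀ P Q : Program, Positive P →
        (∀ Y : Interp, ASEModel A P Y Y ↔ ASEModel A Q Y Y) →
        ∀ X Y : Interp, ASEModel A P X Y → ASEModel A Q X Y) ∧
    (∀ P Q : Program, Positive P → Positive Q →
        ((RelStrongEquiv A P Q ↔ RelUnifEquiv A P Q) ∧
         (RelStrongEquiv A P Q ↔
            ∀ Y : Interp, ASEModel A P Y Y ↔ ASEModel A Q Y Y))) := by
  refine ⟨fun P Q hP htot X Y => ASEModel.of_forall_aseModel_self_iff hP htot, ?_⟩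
  intro P Q hP hQ
  have unif_tot (hu : RelUnifEquiv A P Q) : ∀ Y : Interp, ASEModel A P Y Y ↔ ASEModel A Q Y Y :=
    fun _ => ⟨hu.aseModel_self, RelUnifEquiv.aseModel_self fun F hF Y => (hu F hF Y).symm⟩
  have tot_strong := relStrongEquiv_of_forall_aseModel_self_iff (A := A) hP hQ
  exact ⟨⟨RelStrongEquiv.relUnifEquiv, fun hu => tot_strong (unif_tot hu)⟩,
    ⟨fun hs => unif_tot hs.relUnifEquiv, tot_strong⟩⟩
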